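/- For indices i ∈ {1,…,D} and j ∈ {1,…,R}, the real function f(t) = ℓ evaluated with the entry V_{ij} of V replaced by t (keeping all other entries of A, V, μ, ν fixed) is differentiable at t = V_{ij} and its derivative equals (Σ·V)_{ij} − ((ν + D)/(ν + q))·r_i·(Vᵀ·r)_j, where Σ = Ω⁻¹ and r = y − μ. -/

import Mathlib

/-!
By Jacobi's formula, `t ↦ log det Ω(t)` has derivative `tr(Ω⁻¹ Ω')`; here
`Ω' = E Vᵀ + V Eᵀ`, with `E` the `(i, j)` matrix unit, is the derivative of
`Ω(t) = A + V(t) V(t)ᵀ`, and since `Σ = Ω⁻¹` is symmetric the trace is `2 (Σ V)_ij`.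
Likewise `q' = rᵀ Ω' r = 2 r_i (Vᵀ r)_j`, and the chain rule through `log (1 + q/ν)` gives the
second term.
-/

open Matrix

/-- Multivariate t log-likelihood in the low-rank precision parametrization
`Ω = A + V·Vᵀ` with `A = diagonal a`:
`ℓ = log Γ((ν+D)/2) - log Γ(ν/2) - (D/2)·log ν - (D/2)·log π + (1/2)·log(det Ω)
  - ((ν+D)/2)·log(1 + q/ν)` with `q = (y-μ)ᵀ Ω (y-μ)`. -/
noncomputable def tLRLL (D R : ℕ) (y μ : Fin D → ℝ) (a : Fin D → ℝ)
    (V : Matrix (Fin D) (Fin R) ℝ) (ν : ℝ) : ℝ :=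
  Real.log (Real.Gamma ((ν + D) / 2)) - Real.log (Real.Gamma (ν / 2))
    - ((D : ℝ) / 2) * Real.log ν - ((D : ℝ) / 2) * Real.log Real.pi
    + (1 / 2) * Real.log (Matrix.diagonal a + V * V.transpose).det
    - ((ν + D) / 2) *
        Real.log (1 + ((y - μ) ⬝ᵥ (Matrix.diagonal a + V * V.transpose).mulVec (y - μ)) / ν)

/-- The matrix `V` with its `(i,j)`-entry replaced by `t`. -/
def updEntryV {D R : ℕ} (V : Matrix (Fin D) (Fin R) ℝ) (i : Fin D) (j : Fin R) (t : ℝ) :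
    Matrix (Fin D) (Fin R) ℝ :=
  Matrix.of fun k l => if k = i ∧ l = j then t else V k l

theorem Matrix.det_updateCol_eq_sum_perm {R n : Type*} [CommRing R] [Fintype n] [DecidableEq n]
    (M : Matrix n n R) (k : n) (c : n → R) :
    (M.updateCol k c).det = ∑ σ : Equiv.Perm n,
      (Equiv.Perm.sign σ : R) * ((∏ l ∈ Finset.univ.erase k, M (σ l) l) * c (σ k)) := by
  rw [det_apply']
  refine Finset.sum_congr rfl fun σ _ => ?_
  rw [← Finset.mul_prod_erase _ _ (Finset.mem_univ k), mul_comm (updateCol M k c (σ k) k)]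
  congr 2
  · exact Finset.prod_congr rfl fun l hl => updateCol_ne (Finset.ne_of_mem_erase hl)
  · simp

theorem Matrix.trace_mul_single_mul_transpose_add {R m n : Type*} [CommRing R] [Fintype m]
    [Fintype n] [DecidableEq m] [DecidableEq n] {S : Matrix m m R} (hS : S.IsSymm)
    (V : Matrix m n R) (i : m) (j : n) :
    trace (S * (single i j (1 : R) * Vᵀ + V * (single i j (1 : R))ᵀ)) = 2 * (S * V) i j := by
  have hVS : Vᵀ * S = (S * V)ᵀ := by rw [transpose_mul, hS.eq]
  rw [mul_add, trace_add, ← Matrix.mul_assoc, ← Matrix.mul_assoc, transpose_single, trace_mul_comm,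
    ← Matrix.mul_assoc, hVS, trace_mul_single, trace_mul_single]
  simp only [transpose_apply, MulOpposite.op_one, one_smul]
  ring

theorem Matrix.dotProduct_single_mul_transpose_add_mulVec {R m n : Type*} [CommRing R]
    [Fintype m] [Fintype n] [DecidableEq m] [DecidableEq n] (V : Matrix m n R) (i : m) (j : n)
    (r : m → R) :
    r ⬝ᵥ (single i j (1 : R) * Vᵀ + V * (single i j (1 : R))ᵀ) *ᵥ r = 2 * (r i * (Vᵀ *ᵥ r) j) := by
  rw [add_mulVec, dotProduct_add, ← mulVec_mulVec, ← mulVec_mulVec, transpose_single,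
    single_mulVec, single_mulVec, dotProduct_mulVec, ← mulVec_transpose]
  simp only [dotProduct, one_mul, Function.update_apply, Pi.zero_apply, mul_ite, mul_zero,
    Finset.sum_ite_eq', Finset.mem_univ, ↓reduceIte]
  ring

section EntrywiseDeriv

variable {𝕜 : Type*} [NontriviallyNormedField 𝕜] {l m n : Type*}

def HasEntrywiseDerivAt (M : 𝕜 → Matrix m n 𝕜) (M' : Matrix m n 𝕜) (t : 𝕜) : Prop :=
  ∀ k l, HasDerivAt (fun s => M s k l) (M' k l) t

namespace HasEntrywiseDerivAt

variable {t : 𝕜}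

theorem transpose {M : 𝕜 → Matrix m n 𝕜} {M' : Matrix m n 𝕜} (hM : HasEntrywiseDerivAt M M' t) :
    HasEntrywiseDerivAt (fun s => (M s)ᵀ) M'ᵀ t :=
  fun k l => hM l k

theorem const_add (C : Matrix m n 𝕜) {M : 𝕜 → Matrix m n 𝕜} {M' : Matrix m n 𝕜}
    (hM : HasEntrywiseDerivAt M M' t) : HasEntrywiseDerivAt (fun s => C + M s) M' t :=
  fun k l => (hM k l).const_add (C k l)

theorem mul [Fintype m] {A : 𝕜 → Matrix l m 𝕜} {B : 𝕜 → Matrix m n 𝕜} {A' : Matrix l m 𝕜}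
    {B' : Matrix m n 𝕜} (hA : HasEntrywiseDerivAt A A' t) (hB : HasEntrywiseDerivAt B B' t) :
    HasEntrywiseDerivAt (fun s => A s * B s) (A' * B t + A t * B') t := by
  intro k l
  simp only [mul_apply, Matrix.add_apply, ← Finset.sum_add_distrib]
  exact HasDerivAt.fun_sum fun c _ => (hA k c).mul (hB c l)

theorem dotProduct_mulVec [Fintype m] [Fintype n] {M : 𝕜 → Matrix m n 𝕜} {M' : Matrix m n 𝕜}
    (hM : HasEntrywiseDerivAt M M' t) (x : m → 𝕜) (y : n → 𝕜) :
    HasDerivAt (fun s => x ⬝ᵥ M s *ᵥ y) (x ⬝ᵥ M' *ᵥ y) t := by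
  simp only [dotProduct, mulVec, Finset.mul_sum]
  exact HasDerivAt.fun_sum fun k _ => HasDerivAt.fun_sum fun l _ =>
    ((hM k l).mul_const (y l)).const_mul (x k)

/-- Jacobi's formula: differentiating the Leibniz expansion term by term gives a sum of
determinants with one column differentiated, which Cramer's rule turns into the trace. -/
theorem det [Fintype n] [DecidableEq n] {M : 𝕜 → Matrix n n 𝕜} {M' : Matrix n n 𝕜}
    (hM : HasEntrywiseDerivAt M M' t) :
    HasDerivAt (fun s => (M s).det) (trace (adjugate (M t) * M')) t := by
  have htrace :
      trace (adjugate (M t) * M') = ∑ k, ((M t).updateCol k (fun l => M' l k)).det := by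
    simp only [trace, diag, ← cramer_apply, cramer_eq_adjugate_mulVec, mul_apply, mulVec,
      dotProduct]
  rw [htrace]
  simp only [det_updateCol_eq_sum_perm]
  rw [Finset.sum_comm]
  simp only [det_apply']
  refine HasDerivAt.fun_sum fun σ _ => ?_
  rw [← Finset.mul_sum]
  refine ((HasDerivAt.fun_finsetProd fun l _ => hM (σ l) l).const_mul _).congr_deriv ?_
  simp [smul_eq_mul]

theorem log_det [Fintype n] [DecidableEq n] {M : ℝ → Matrix n n ℝ} {M' : Matrix n n ℝ} {t : ℝ}
    (hM : HasEntrywiseDerivAt M M' t) (hdet : (M t).det ≠ 0) :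
    HasDerivAt (fun s => Real.log (M s).det) (trace ((M t)⁻¹ * M')) t := by
  refine (hM.det.log hdet).congr_deriv ?_
  rw [inv_def, Ring.inverse_eq_inv', smul_mul, trace_smul, smul_eq_mul, div_eq_inv_mul]

end HasEntrywiseDerivAt

end EntrywiseDeriv

section updEntryV

variable {D R : ℕ} (V : Matrix (Fin D) (Fin R) ℝ) (i : Fin D) (j : Fin R)

theorem updEntryV_self : updEntryV V i j (V i j) = V := by
  ext k l
  by_cases h : k = i ∧ l = j <;> simp [updEntryV, h]

theorem hasEntrywiseDerivAt_updEntryV (t : ℝ) :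
    HasEntrywiseDerivAt (updEntryV V i j) (single i j (1 : ℝ)) t := by
  intro k l
  by_cases h : k = i ∧ l = j
  · obtain ⟨rfl, rfl⟩ := h
    simpa [updEntryV] using hasDerivAt_id' t
  · have h' : ¬(i = k ∧ j = l) := fun ⟨hi, hj⟩ => h ⟨hi.symm, hj.symm⟩
    simpa [updEntryV, h, h', single_apply] using hasDerivAt_const t (V k l)

theorem hasEntrywiseDerivAt_add_updEntryV_mul_transpose (A : Matrix (Fin D) (Fin D) ℝ) :
    HasEntrywiseDerivAt (fun t => A + updEntryV V i j t * (updEntryV V i j t)ᵀ)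
      (single i j (1 : ℝ) * Vᵀ + V * (single i j (1 : ℝ))ᵀ) (V i j) := by
  have h := hasEntrywiseDerivAt_updEntryV V i j (V i j)
  simpa only [updEntryV_self] using (h.mul h.transpose).const_add A

end updEntryV

theorem tLR_deriv_V_general (D R : ℕ) (y μ : Fin D → ℝ) (ν : ℝ) (hν : 0 < ν)
    (a : Fin D → ℝ) (ha : ∀ k, 0 < a k)
    (V : Matrix (Fin D) (Fin R) ℝ) (i : Fin D) (j : Fin R) :
    HasDerivAt (fun t : ℝ => tLRLL D R y μ a (updEntryV V i j t) ν)
      (((Matrix.diagonal a + V * V.transpose)⁻¹ * V) i j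
        - (ν + D) /
            (ν + (y - μ) ⬝ᵥ (Matrix.diagonal a + V * V.transpose).mulVec (y - μ)) *
            (y i - μ i) * V.transpose.mulVec (y - μ) j)
      (V i j) := by
  have hΩ : (diagonal a + V * Vᵀ).PosDef := (PosDef.diagonal ha).add_posSemidef <| by
    simpa using posSemidef_self_mul_conjTranspose V
  have hq : 0 ≤ (y - μ) ⬝ᵥ (diagonal a + V * Vᵀ) *ᵥ (y - μ) := by
    simpa using hΩ.posSemidef.dotProduct_mulVec_nonneg (y - μ)
  have hΩsymm : (diagonal a + V * Vᵀ).IsSymm :=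
    (isSymm_diagonal a).add (by simp only [IsSymm, transpose_mul, transpose_transpose])
  have hΩderiv := hasEntrywiseDerivAt_add_updEntryV_mul_transpose V i j (diagonal a)
  have hlogdet := hΩderiv.log_det (by simpa [updEntryV_self] using hΩ.det_pos.ne')
  have hlogq := (((hΩderiv.dotProduct_mulVec (y - μ) (y - μ)).div_const ν).const_add 1).log
    (by simp only [updEntryV_self]; positivity)
  refine (((hasDerivAt_const _ _).add (hlogdet.const_mul (1 / 2))).sub
    (hlogq.const_mul ((ν + D) / 2))).congr_deriv ?_
  rw [updEntryV_self, trace_mul_single_mul_transpose_add hΩsymm.inv,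
    dotProduct_single_mul_transpose_add_mulVec, Pi.sub_apply]
  field_simp
  ring

/-- First partial derivative of the low-rank multivariate t log-likelihood with respect
to the entry `V_{ij}`: it equals `(Σ·V)_{ij} - ((ν + D)/(ν + q))·r_i·(Vᵀ·r)_j` where
`Σ = Ω⁻¹`, `r = y - μ` and `q = rᵀ Ω r`. -/
theorem tLR_deriv_V (D R : ℕ) (hD : 1 ≤ D) (y μ : Fin D → ℝ) (ν : ℝ) (hν : 0 < ν)
    (a : Fin D → ℝ) (ha : ∀ k, 0 < a k)
    (V : Matrix (Fin D) (Fin R) ℝ) (i : Fin D) (j : Fin R) :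
    HasDerivAt (fun t : ℝ => tLRLL D R y μ a (updEntryV V i j t) ν)
      (((Matrix.diagonal a + V * V.transpose)⁻¹ * V) i j
        - (ν + D) /
            (ν + (y - μ) ⬝ᵥ (Matrix.diagonal a + V * V.transpose).mulVec (y - μ)) *
            (y i - μ i) * V.transpose.mulVec (y - μ) j)
      (V i j) :=
  tLR_deriv_V_general D R y μ ν hν a ha V i j
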